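/- arXiv:1905.09032 — 2 statements merged into one kernel-verified Lean document; each statement's English description precedes it below -/
import Mathlib

section
/- Let L = L₁ + L₂ be the orthogonal direct sum of two even nondegenerate lattices such that the 3-torsion subgroup of discr L₁ is cyclic of order 3 and discr L₂ is annihilated by 2. Let g be an isometry of L and let v be a 6-root of L (b(v,v) = 6 and 3 divides b(v,x) for every x ∈ L). Write v = v₁ + v₂ and g(v) = w₁ + w₂ with v₁, w₁ ∈ L₁ and v₂, w₂ ∈ L₂. Then: (i) if w₁ − v₁ ∈ 3L₁, then the automorphism of the 3-torsion subgroup of discr L induced by g is the identity; (ii) if g(v) − v ∉ 3L, then the automorphism of the 3-torsion subgroup of discr L induced by g is multiplication by −1. -/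
/-!  Basic framework for integral lattices given by Gram matrices. -/

structure IntLattice where
  n : ℕ
  B : Matrix (Fin n) (Fin n) ℤ

namespace IntLattice

/-- The bilinear form of the lattice on `ℤ^n`. -/
def bform (L : IntLattice) (x y : Fin L.n → ℤ) : ℤ :=
  dotProduct x (L.B.mulVec y)

/-- The rational extension of the bilinear form, on `ℚ^n = L ⊗ ℚ`. -/
def bQ (L : IntLattice) (x y : Fin L.n → ℚ) : ℚ :=
  dotProduct x ((L.B.map (Int.cast : ℤ → ℚ)).mulVec y)

/-- The real extension of the bilinear form, on `ℝ^n = L ⊗ ℝ`. -/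
def bR (L : IntLattice) (x y : Fin L.n → ℝ) : ℝ :=
  dotProduct x ((L.B.map (Int.cast : ℤ → ℝ)).mulVec y)

/-- The lattice is even: `b(x,x)` is even for all `x`. -/
def IsEvenLat (L : IntLattice) : Prop := ∀ x, Even (L.bform x x)

/-- Nondegeneracy of the bilinear form. -/
def Nondeg (L : IntLattice) : Prop := L.B.det ≠ 0

/-- Symmetry of the Gram matrix. -/
def IsSymmLat (L : IntLattice) : Prop := L.B.IsSymm

/-- `ℤ ⊂ ℚ` as a `ℤ`-submodule of `ℚ`. -/
def intQ : Submodule ℤ ℚ := Submodule.span ℤ ({1} : Set ℚ)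

/-- The lattice `L = ℤ^n` sitting inside `ℚ^n = L ⊗ ℚ`. -/
def latt (L : IntLattice) : Submodule ℤ (Fin L.n → ℚ) :=
  Submodule.pi Set.univ fun _ => intQ

lemma bQ_add_left (L : IntLattice) (a b y : Fin L.n → ℚ) :
    L.bQ (a + b) y = L.bQ a y + L.bQ b y := add_dotProduct _ _ _

lemma bQ_smul_left (L : IntLattice) (c : ℤ) (a y : Fin L.n → ℚ) :
    L.bQ (c • a) y = c • L.bQ a y := smul_dotProduct _ _ _

lemma bQ_zero_left (L : IntLattice) (y : Fin L.n → ℚ) :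
    L.bQ 0 y = 0 := zero_dotProduct _

/-- The dual lattice `L♯ = {y ∈ L ⊗ ℚ : b(y,x) ∈ ℤ for all x ∈ L}`, inside `ℚ^n`. -/
def dual (L : IntLattice) : Submodule ℤ (Fin L.n → ℚ) where
  carrier := {y | ∀ x : Fin L.n → ℤ, L.bQ y (fun i => (x i : ℚ)) ∈ intQ}
  add_mem' := by
    intro a b ha hb
    simp only [Set.mem_setOf_eq] at *
    intro x
    rw [bQ_add_left]
    exact add_mem (ha x) (hb x)
  zero_mem' := by
    simp only [Set.mem_setOf_eq]
    intro x
    rw [bQ_zero_left]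
    exact zero_mem _
  smul_mem' := by
    intro c a ha
    simp only [Set.mem_setOf_eq] at *
    intro x
    rw [bQ_smul_left]
    exact Submodule.smul_mem _ _ (ha x)

/-- The discriminant group `discr L = L♯ / L`. -/
abbrev discrG (L : IntLattice) :=
  L.dual ⧸ Submodule.comap L.dual.subtype L.latt

/-- The discriminant quadratic form takes only integer values (mod 2ℤ) on the 2-torsion
subgroup of the discriminant group; phrased via representatives. -/
def EvenTwoTorsion (L : IntLattice) : Prop :=
  ∀ y ∈ L.dual, (2 : ℤ) • y ∈ L.latt → ∃ m : ℤ, L.bQ y y = (m : ℚ)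

/-- Two lattices are isometric: a `ℤ`-linear isomorphism preserving the forms. -/
def Isometric (L M : IntLattice) : Prop :=
  ∃ e : (Fin L.n → ℤ) ≃ₗ[ℤ] (Fin M.n → ℤ), ∀ x y, M.bform (e x) (e y) = L.bform x y

/-- `σ₋(L) = k`: some (hence any) real diagonalization of the form has exactly `k`
negative diagonal entries. -/
def negIndexEq (L : IntLattice) (k : ℕ) : Prop :=
  ∃ P : Matrix (Fin L.n) (Fin L.n) ℝ, IsUnit P.det ∧ ∃ d : Fin L.n → ℝ,
    P.transpose * (L.B.map (Int.cast : ℤ → ℝ)) * P = Matrix.diagonal d ∧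
    Nat.card {i : Fin L.n // d i < 0} = k

/-- A 2-root: a vector of square 2. -/
def IsTwoRoot (L : IntLattice) (v : Fin L.n → ℤ) : Prop := L.bform v v = 2

/-- A 6-root: a vector of square 6 with `3 ∣ b(v,x)` for all `x ∈ L`. -/
def IsSixRoot (L : IntLattice) (v : Fin L.n → ℤ) : Prop :=
  L.bform v v = 6 ∧ ∀ x, (3 : ℤ) ∣ L.bform v x

/-- A root: a 2-root or a 6-root. -/
def IsRoot (L : IntLattice) (v : Fin L.n → ℤ) : Prop := L.IsTwoRoot v ∨ L.IsSixRoot v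

/-- The set `{x ∈ L ⊗ ℝ : b(x,x) < 0, b(x,v) ≠ 0 for every root v}`. -/
def negCone (L : IntLattice) : Set (Fin L.n → ℝ) :=
  {x | L.bR x x < 0 ∧ ∀ v : Fin L.n → ℤ, L.IsRoot v → L.bR x (fun i => (v i : ℝ)) ≠ 0}

/-- The matrix of an endomorphism of `ℤ^n` in the standard basis. -/
def matOf (L : IntLattice) (g : (Fin L.n → ℤ) →ₗ[ℤ] (Fin L.n → ℤ)) :
    Matrix (Fin L.n) (Fin L.n) ℤ :=
  Matrix.of fun i j => g (Pi.single j 1) i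

/-- The real extension `g ⊗ ℝ` of an endomorphism `g` of the lattice. -/
def mapR (L : IntLattice) (g : (Fin L.n → ℤ) →ₗ[ℤ] (Fin L.n → ℤ)) :
    (Fin L.n → ℝ) → (Fin L.n → ℝ) :=
  fun x => ((L.matOf g).map (Int.cast : ℤ → ℝ)).mulVec x

/-- The rational extension `g ⊗ ℚ` of an endomorphism `g` of the lattice. -/
def mapQ (L : IntLattice) (g : (Fin L.n → ℤ) →ₗ[ℤ] (Fin L.n → ℤ)) :
    (Fin L.n → ℚ) → (Fin L.n → ℚ) :=
  fun x => ((L.matOf g).map (Int.cast : ℤ → ℚ)).mulVec x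

/-- `g` induces multiplication by `-1` on the 3-torsion subgroup of the discriminant
group; phrased via representatives. -/
def InducesNeg3 (L : IntLattice) (g : (Fin L.n → ℤ) →ₗ[ℤ] (Fin L.n → ℤ)) : Prop :=
  ∀ y ∈ L.dual, (3 : ℤ) • y ∈ L.latt → L.mapQ g y + y ∈ L.latt

/-- `g` induces the identity on the 3-torsion subgroup of the discriminant group;
phrased via representatives. -/
def InducesId3 (L : IntLattice) (g : (Fin L.n → ℤ) →ₗ[ℤ] (Fin L.n → ℤ)) : Prop :=
  ∀ y ∈ L.dual, (3 : ℤ) • y ∈ L.latt → L.mapQ g y - y ∈ L.latt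

/-- `g` is an isometry of `L`. -/
def IsIsometry (L : IntLattice) (g : (Fin L.n → ℤ) ≃ₗ[ℤ] (Fin L.n → ℤ)) : Prop :=
  ∀ x y, L.bform (g x) (g y) = L.bform x y

/-- Achirality: there are an isometry `g` of `L` and a connected component `C` of
`negCone L` such that `(g ⊗ ℝ)(C) = C` and `g` induces `-1` on the 3-torsion of the
discriminant group. -/
def Achiral (L : IntLattice) : Prop :=
  ∃ g : (Fin L.n → ℤ) ≃ₗ[ℤ] (Fin L.n → ℤ), L.IsIsometry g ∧
    (∃ x ∈ L.negCone,
      L.mapR g.toLinearMap '' connectedComponentIn L.negCone x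
        = connectedComponentIn L.negCone x) ∧
    L.InducesNeg3 g.toLinearMap

def Chiral (L : IntLattice) : Prop := ¬ L.Achiral

lemma bform_add_left (L : IntLattice) (a b y : Fin L.n → ℤ) :
    L.bform (a + b) y = L.bform a y + L.bform b y := add_dotProduct _ _ _

lemma bform_smul_left (L : IntLattice) (c : ℤ) (a y : Fin L.n → ℤ) :
    L.bform (c • a) y = c • L.bform a y := smul_dotProduct _ _ _

lemma bform_zero_left (L : IntLattice) (y : Fin L.n → ℤ) :
    L.bform 0 y = 0 := zero_dotProduct _

/-- The orthogonal complement of a sublattice. -/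
def ortho (L : IntLattice) (S : Submodule ℤ (Fin L.n → ℤ)) : Submodule ℤ (Fin L.n → ℤ) where
  carrier := {x | ∀ y ∈ S, L.bform x y = 0}
  add_mem' := by
    intro a b ha hb
    simp only [Set.mem_setOf_eq] at *
    intro y hy
    rw [bform_add_left, ha y hy, hb y hy]
    ring
  zero_mem' := by
    simp only [Set.mem_setOf_eq]
    intro y _
    exact bform_zero_left L y
  smul_mem' := by
    intro c a ha
    simp only [Set.mem_setOf_eq] at *
    intro y hy
    rw [bform_smul_left, ha y hy]
    simp
  
/-- A primitive sublattice: the quotient is torsion free. -/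
def IsPrimitive (L : IntLattice) (S : Submodule ℤ (Fin L.n → ℤ)) : Prop :=
  ∀ (x : Fin L.n → ℤ) (m : ℤ), m ≠ 0 → m • x ∈ S → x ∈ S

/-- A sublattice `S ⊂ L` (with the restricted form) is isometric to the lattice `M`. -/
def SubIsometric (L : IntLattice) (S : Submodule ℤ (Fin L.n → ℤ)) (M : IntLattice) : Prop :=
  ∃ e : S ≃ₗ[ℤ] (Fin M.n → ℤ), ∀ x y : S, M.bform (e x) (e y) = L.bform x y

/-! ### Concrete lattices -/

/-- The hyperbolic plane `U`. -/
def latU : IntLattice := ⟨2, !![0,1;1,0]⟩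

/-- The root lattice `A₁`. -/
def latA1 : IntLattice := ⟨1, !![2]⟩

/-- The root lattice `A₂`. -/
def latA2 : IntLattice := ⟨2, !![2,-1;-1,2]⟩

/-- The root lattice `D₄` (first vector is the central node). -/
def latD4 : IntLattice := ⟨4, !![2,-1,-1,-1;-1,2,0,0;-1,0,2,0;-1,0,0,2]⟩

/-- The root lattice `E₆`: chain `e₁,…,e₅`, with `e₆` attached to `e₃`. -/
def latE6 : IntLattice :=
  ⟨6, !![ 2,-1, 0, 0, 0, 0;
         -1, 2,-1, 0, 0, 0;
          0,-1, 2,-1, 0,-1;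
          0, 0,-1, 2,-1, 0;
          0, 0, 0,-1, 2, 0;
          0, 0,-1, 0, 0, 2]⟩

/-- The root lattice `E₈`: chain `e₁,…,e₇`, with `e₈` attached to `e₅`. -/
def latE8 : IntLattice :=
  ⟨8, !![ 2,-1, 0, 0, 0, 0, 0, 0;
         -1, 2,-1, 0, 0, 0, 0, 0;
          0,-1, 2,-1, 0, 0, 0, 0;
          0, 0,-1, 2,-1, 0, 0, 0;
          0, 0, 0,-1, 2,-1, 0,-1;
          0, 0, 0, 0,-1, 2,-1, 0;
          0, 0, 0, 0, 0,-1, 2, 0;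
          0, 0, 0, 0,-1, 0, 0, 2]⟩

/-- The rank one lattice `⟨k⟩`; in particular `−A₁ = ⟨-2⟩`. -/
def latGen (k : ℤ) : IntLattice := ⟨1, !![k]⟩

/-- `L(c)`: the lattice `L` with its form multiplied by `c`. -/
def twist (c : ℤ) (L : IntLattice) : IntLattice := ⟨L.n, c • L.B⟩

/-- Orthogonal direct sum of two lattices. -/
def dsum (L M : IntLattice) : IntLattice :=
  ⟨L.n + M.n,
    Matrix.submatrix (Matrix.fromBlocks L.B 0 0 M.B) finSumFinEquiv.symm finSumFinEquiv.symm⟩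

instance : Add IntLattice := ⟨dsum⟩

/-- Orthogonal direct sum of `t` copies of a lattice. -/
def rep : ℕ → IntLattice → IntLattice
  | 0, _ => ⟨0, 0⟩
  | (k+1), L => rep k L + L

end IntLattice

/-!
For a 6-root `v`, the vector `v/3` lies in `L♯` but not in `L` (since `b(v,v) = 6 ∉ 9ℤ`), so it
represents a nonzero 3-torsion class of `discr L`. As `discr L₂` has no 3-torsion, the 3-torsion
of `discr L` is the group of order 3 generated by `[v/3]`, and `g` acts on it through the residue
`m` mod 3 with `g(v)/3 ≡ m • v/3 (mod L)`. In (i) the `L₂`-component of `g(v)/3 - v/3` lies in `L₂`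
automatically, so `m ≡ 1`. In (ii), `m ≢ 1` by hypothesis and `m ≢ 0` because `g(v)` is again a
6-root, so `m ≡ -1`.
-/

theorem Submodule.zsmul_sub_zsmul_mem {M : Type*} [AddCommGroup M] (p : Submodule ℤ M)
    {a : M} {n m r : ℤ} (ha : n • a ∈ p) (h : n ∣ m - r) : m • a - r • a ∈ p := by
  obtain ⟨k, hk⟩ := h
  rw [← sub_smul, hk, mul_comm, mul_smul]
  exact p.smul_mem k ha

namespace IntLattice

section Basic

variable {L : IntLattice}

theorem mem_intQ_iff {q : ℚ} : q ∈ intQ ↔ ∃ m : ℤ, (m : ℚ) = q := by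
  simp [intQ, Submodule.mem_span_singleton]

theorem mem_latt_iff {y : Fin L.n → ℚ} : y ∈ L.latt ↔ ∀ i, ∃ m : ℤ, (m : ℚ) = y i := by
  simp [latt, Submodule.mem_pi, mem_intQ_iff]

theorem intCast_mem_latt (x : Fin L.n → ℤ) : (fun i => (x i : ℚ)) ∈ L.latt :=
  mem_latt_iff.2 fun i => ⟨x i, rfl⟩

theorem bQ_intCast (x y : Fin L.n → ℤ) :
    L.bQ (fun i => (x i : ℚ)) (fun i => (y i : ℚ)) = L.bform x y := by
  simp [bQ, bform, dotProduct, Matrix.mulVec]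

theorem bform_smul_right (c : ℤ) (x y : Fin L.n → ℤ) :
    L.bform x (c • y) = c • L.bform x y := by
  rw [bform, Matrix.mulVec_smul, dotProduct_smul, bform]

theorem mk_eq_zero_iff (z : L.dual) :
    (Submodule.Quotient.mk z : L.discrG) = 0 ↔ (z : Fin L.n → ℚ) ∈ L.latt := by
  simp [Submodule.Quotient.mk_eq_zero]

theorem mk_mem_torsionBy_three_iff (z : L.dual) :
    (Submodule.Quotient.mk z : L.discrG) ∈ Submodule.torsionBy ℤ L.discrG 3 ↔
      (3 : ℤ) • (z : Fin L.n → ℚ) ∈ L.latt := by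
  rw [Submodule.mem_torsionBy_iff, ← Submodule.Quotient.mk_smul, mk_eq_zero_iff]
  rfl

theorem matOf_mulVec (g : (Fin L.n → ℤ) →ₗ[ℤ] (Fin L.n → ℤ)) (x : Fin L.n → ℤ) :
    (L.matOf g).mulVec x = g x := by
  have : L.matOf g = LinearMap.toMatrix' g := by
    ext i j
    simp [matOf, LinearMap.toMatrix'_apply]
  rw [this, LinearMap.toMatrix'_mulVec]

theorem mapQ_intCast (g : (Fin L.n → ℤ) →ₗ[ℤ] (Fin L.n → ℤ)) (x : Fin L.n → ℤ) :
    L.mapQ g (fun i => (x i : ℚ)) = fun i => (g x i : ℚ) := by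
  funext i
  rw [← matOf_mulVec]
  simp [mapQ, Matrix.mulVec, dotProduct]

theorem mapQ_sub (g : (Fin L.n → ℤ) →ₗ[ℤ] (Fin L.n → ℤ)) (x y : Fin L.n → ℚ) :
    L.mapQ g (x - y) = L.mapQ g x - L.mapQ g y :=
  Matrix.mulVec_sub _ x y

theorem mapQ_smul {R : Type*} [DistribSMul R ℚ] [SMulCommClass R ℚ ℚ]
    (g : (Fin L.n → ℤ) →ₗ[ℤ] (Fin L.n → ℤ)) (c : R) (x : Fin L.n → ℚ) :
    L.mapQ g (c • x) = c • L.mapQ g x :=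
  Matrix.mulVec_smul _ c x

theorem mapQ_mem_latt (g : (Fin L.n → ℤ) →ₗ[ℤ] (Fin L.n → ℤ)) {y : Fin L.n → ℚ}
    (hy : y ∈ L.latt) : L.mapQ g y ∈ L.latt := by
  choose x hx using mem_latt_iff.1 hy
  obtain rfl : (fun i => (x i : ℚ)) = y := funext hx
  rw [mapQ_intCast]
  exact intCast_mem_latt _

end Basic

section DirectSum

variable {L1 L2 : IntLattice}

theorem add_B : (L1 + L2).B =
    (Matrix.fromBlocks L1.B 0 0 L2.B).submatrix finSumFinEquiv.symm finSumFinEquiv.symm :=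
  rfl

@[simp] theorem add_B_castAdd_castAdd (i j : Fin L1.n) :
    (L1 + L2).B (Fin.castAdd L2.n i) (Fin.castAdd L2.n j) = L1.B i j := by
  simp [add_B]

@[simp] theorem add_B_castAdd_natAdd (i : Fin L1.n) (j : Fin L2.n) :
    (L1 + L2).B (Fin.castAdd L2.n i) (Fin.natAdd L1.n j) = 0 := by
  simp [add_B]

@[simp] theorem add_B_natAdd_castAdd (i : Fin L2.n) (j : Fin L1.n) :
    (L1 + L2).B (Fin.natAdd L1.n i) (Fin.castAdd L2.n j) = 0 := by
  simp [add_B]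

@[simp] theorem add_B_natAdd_natAdd (i j : Fin L2.n) :
    (L1 + L2).B (Fin.natAdd L1.n i) (Fin.natAdd L1.n j) = L2.B i j := by
  simp [add_B]

theorem sum_fin_add {M : Type*} [AddCommMonoid M] (f : Fin (L1 + L2).n → M) :
    ∑ i, f i = ∑ i, f (Fin.castAdd L2.n i) + ∑ i, f (Fin.natAdd L1.n i) :=
  Fin.sum_univ_add f

theorem mem_latt_add_iff {y : Fin (L1 + L2).n → ℚ} :
    y ∈ (L1 + L2).latt ↔ y ∘ Fin.castAdd L2.n ∈ L1.latt ∧ y ∘ Fin.natAdd L1.n ∈ L2.latt := by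
  simp only [mem_latt_iff]
  exact Fin.forall_fin_add (m := L1.n) (n := L2.n) _

theorem comp_castAdd_mem_dual {y : Fin (L1 + L2).n → ℚ} (hy : y ∈ (L1 + L2).dual) :
    y ∘ Fin.castAdd L2.n ∈ L1.dual := by
  intro x
  have h := hy (Fin.append x 0)
  simp [bQ, dotProduct, Matrix.mulVec, sum_fin_add] at h
  exact h

theorem comp_natAdd_mem_dual {y : Fin (L1 + L2).n → ℚ} (hy : y ∈ (L1 + L2).dual) :
    y ∘ Fin.natAdd L1.n ∈ L2.dual := by
  intro x
  have h := hy (Fin.append 0 x)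
  simp [bQ, dotProduct, Matrix.mulVec, sum_fin_add] at h
  exact h

end DirectSum

theorem two_smul_mem_latt {L : IntLattice} (h2 : ∀ x : L.discrG, (2 : ℤ) • x = 0)
    {y : Fin L.n → ℚ} (hy : y ∈ L.dual) : (2 : ℤ) • y ∈ L.latt := by
  have := h2 (Submodule.Quotient.mk ⟨y, hy⟩)
  rwa [← Submodule.Quotient.mk_smul, mk_eq_zero_iff] at this

theorem mem_latt_of_three_smul_mem {L : IntLattice} (h2 : ∀ x : L.discrG, (2 : ℤ) • x = 0)
    {y : Fin L.n → ℚ} (hy : y ∈ L.dual) (h3 : (3 : ℤ) • y ∈ L.latt) : y ∈ L.latt := by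
  have : y = (3 : ℤ) • y - (2 : ℤ) • y := by rw [← sub_smul]; norm_num
  rw [this]
  exact sub_mem h3 (two_smul_mem_latt h2 hy)

theorem mem_latt_add_iff_of_three_torsion {L1 L2 : IntLattice}
    (h2 : ∀ x : L2.discrG, (2 : ℤ) • x = 0) {y : Fin (L1 + L2).n → ℚ}
    (hy : y ∈ (L1 + L2).dual) (h3 : (3 : ℤ) • y ∈ (L1 + L2).latt) :
    y ∈ (L1 + L2).latt ↔ y ∘ Fin.castAdd L2.n ∈ L1.latt := by
  rw [mem_latt_add_iff, and_iff_left_iff_imp]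
  exact fun _ => mem_latt_of_three_smul_mem h2 (comp_natAdd_mem_dual hy) (mem_latt_add_iff.1 h3).2

/-- Every 3-torsion class of `discr L` is a multiple of the class of `a`. -/
def GeneratesThreeTorsion (L : IntLattice) (a : Fin L.n → ℚ) : Prop :=
  ∀ y ∈ L.dual, (3 : ℤ) • y ∈ L.latt → ∃ m : ℤ, y - m • a ∈ L.latt

theorem generatesThreeTorsion_of_card_eq_three {L : IntLattice}
    (h3 : Nat.card (Submodule.torsionBy ℤ L.discrG 3) = 3) {a : Fin L.n → ℚ}
    (ha : a ∈ L.dual) (ha3 : (3 : ℤ) • a ∈ L.latt) (hal : a ∉ L.latt) :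
    L.GeneratesThreeTorsion a := by
  intro y hy hy3
  let A : Submodule.torsionBy ℤ L.discrG 3 := ⟨_, (mk_mem_torsionBy_three_iff ⟨a, ha⟩).2 ha3⟩
  let Y : Submodule.torsionBy ℤ L.discrG 3 := ⟨_, (mk_mem_torsionBy_three_iff ⟨y, hy⟩).2 hy3⟩
  have hA : A ≠ 0 := fun h => hal ((mk_eq_zero_iff _).1 (congrArg Subtype.val h))
  obtain ⟨m, hm⟩ :=
    AddSubgroup.mem_zmultiples_iff.1 (mem_zmultiples_of_prime_card h3 hA (g' := Y))
  refine ⟨m, (mk_eq_zero_iff (⟨y, hy⟩ - m • ⟨a, ha⟩)).1 ?_⟩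
  rw [Submodule.Quotient.mk_sub, Submodule.Quotient.mk_smul, sub_eq_zero]
  exact (congrArg Subtype.val hm).symm

theorem generatesThreeTorsion_add {L1 L2 : IntLattice}
    (h3 : Nat.card (Submodule.torsionBy ℤ L1.discrG 3) = 3)
    (h2 : ∀ x : L2.discrG, (2 : ℤ) • x = 0) {a : Fin (L1 + L2).n → ℚ}
    (ha : a ∈ (L1 + L2).dual) (ha3 : (3 : ℤ) • a ∈ (L1 + L2).latt) (hal : a ∉ (L1 + L2).latt) :
    (L1 + L2).GeneratesThreeTorsion a := by
  rw [mem_latt_add_iff_of_three_torsion h2 ha ha3] at hal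
  have hgen := generatesThreeTorsion_of_card_eq_three h3 (comp_castAdd_mem_dual ha)
    (mem_latt_add_iff.1 ha3).1 hal
  intro y hy hy3
  obtain ⟨m, hm⟩ := hgen _ (comp_castAdd_mem_dual hy) (mem_latt_add_iff.1 hy3).1
  have h3ym : (3 : ℤ) • (y - m • a) ∈ (L1 + L2).latt := by
    rw [smul_sub, smul_comm]
    exact sub_mem hy3 ((L1 + L2).latt.smul_mem m ha3)
  refine ⟨m, (mem_latt_add_iff_of_three_torsion h2 ?_ h3ym).2 hm⟩
  exact sub_mem hy ((L1 + L2).dual.smul_mem m ha)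

theorem GeneratesThreeTorsion.mapQ_sub_smul_mem_latt {L : IntLattice} {a : Fin L.n → ℚ}
    (ha : L.GeneratesThreeTorsion a) (g : (Fin L.n → ℤ) →ₗ[ℤ] (Fin L.n → ℤ)) {ε : ℤ}
    (hga : L.mapQ g a - ε • a ∈ L.latt) {y : Fin L.n → ℚ} (hy : y ∈ L.dual)
    (hy3 : (3 : ℤ) • y ∈ L.latt) : L.mapQ g y - ε • y ∈ L.latt := by
  obtain ⟨m, hm⟩ := ha y hy hy3
  have : L.mapQ g y - ε • y =
      L.mapQ g (y - m • a) + m • (L.mapQ g a - ε • a) - ε • (y - m • a) := by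
    rw [mapQ_sub, mapQ_smul]
    module
  rw [this]
  exact sub_mem (add_mem (mapQ_mem_latt g hm) (L.latt.smul_mem m hga)) (L.latt.smul_mem ε hm)

def third {ι : Type*} (v : ι → ℤ) : ι → ℚ := (3 : ℚ)⁻¹ • fun i => (v i : ℚ)

section Third

variable {L : IntLattice}

theorem three_smul_third_mem_latt (v : Fin L.n → ℤ) : (3 : ℤ) • third v ∈ L.latt := by
  have : (3 : ℤ) • third v = fun i => (v i : ℚ) := by
    funext i
    simp [third]
  rw [this]
  exact intCast_mem_latt v

theorem third_sub {ι : Type*} (v w : ι → ℤ) : third (w - v) = third w - third v := by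
  funext i
  simp [third, mul_sub]

theorem third_mem_latt_iff (v : Fin L.n → ℤ) : third v ∈ L.latt ↔ ∀ i, (3 : ℤ) ∣ v i := by
  refine mem_latt_iff.trans <| forall_congr' fun i =>
    ⟨fun ⟨m, hm⟩ => ⟨m, ?_⟩, fun ⟨m, hm⟩ => ⟨m, ?_⟩⟩
  · simp only [third, Pi.smul_apply, smul_eq_mul] at hm
    exact_mod_cast (by linarith : (v i : ℚ) = 3 * m)
  · simp [third, hm]

theorem third_mem_dual {v : Fin L.n → ℤ} (hv : ∀ x, (3 : ℤ) ∣ L.bform v x) :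
    third v ∈ L.dual := by
  intro x
  obtain ⟨k, hk⟩ := hv x
  rw [third, bQ, smul_dotProduct, ← bQ, bQ_intCast, hk, mem_intQ_iff]
  exact ⟨k, by push_cast; ring⟩

theorem mapQ_third (g : (Fin L.n → ℤ) →ₗ[ℤ] (Fin L.n → ℤ)) (v : Fin L.n → ℤ) :
    L.mapQ g (third v) = third (g v) := by
  rw [third, mapQ_smul, mapQ_intCast, third]

theorem IsSixRoot.third_not_mem_latt {v : Fin L.n → ℤ} (hv : L.IsSixRoot v) :
    third v ∉ L.latt := by
  rw [third_mem_latt_iff]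
  intro h
  choose u hu using h
  obtain rfl : v = (3 : ℤ) • u := funext hu
  have := hv.1
  rw [bform_smul_left, bform_smul_right, smul_eq_mul, smul_eq_mul] at this
  omega

theorem IsSixRoot.map_isometry {v : Fin L.n → ℤ} (hv : L.IsSixRoot v)
    {g : (Fin L.n → ℤ) ≃ₗ[ℤ] (Fin L.n → ℤ)} (hg : L.IsIsometry g) : L.IsSixRoot (g v) := by
  refine ⟨(hg v v).trans hv.1, fun x => ?_⟩
  rw [← g.apply_symm_apply x, hg]
  exact hv.2 _

theorem third_add_third_mem_latt {v w : Fin L.n → ℤ} (hv : L.GeneratesThreeTorsion (third v))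
    (hw : L.IsSixRoot w) (hvw : ¬ ∀ i, (3 : ℤ) ∣ w i - v i) : third w + third v ∈ L.latt := by
  obtain ⟨m, hm⟩ := hv _ (third_mem_dual hw.2) (three_smul_third_mem_latt w)
  have hr : ∀ r : ℤ, 3 ∣ m - r → third w - r • third v ∈ L.latt := fun r hr => by
    rw [← sub_add_sub_cancel _ (m • third v)]
    exact add_mem hm (L.latt.zsmul_sub_zsmul_mem (three_smul_third_mem_latt v) hr)
  obtain h | h | h : m % 3 = 0 ∨ m % 3 = 1 ∨ m % 3 = 2 := by omega
  · have := hr 0 (by omega)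
    rw [zero_smul, sub_zero] at this
    exact absurd this hw.third_not_mem_latt
  · have := hr 1 (by omega)
    rw [one_smul, ← third_sub, third_mem_latt_iff] at this
    exact absurd this hvw
  · simpa using hr (-1) (by omega)

end Third

end IntLattice

open IntLattice in
theorem statement_1_general (L1 L2 : IntLattice)
    (h31 : Nat.card (Submodule.torsionBy ℤ L1.discrG 3) = 3)
    (h22 : ∀ x : L2.discrG, (2 : ℤ) • x = 0)
    (g : (Fin (L1 + L2).n → ℤ) ≃ₗ[ℤ] (Fin (L1 + L2).n → ℤ))
    (hg : (L1 + L2).IsIsometry g)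
    (v : Fin (L1 + L2).n → ℤ)
    (hv : (L1 + L2).IsSixRoot v) :
    ((∀ i : Fin L1.n,
        (3 : ℤ) ∣ (g v (Fin.castAdd L2.n i) - v (Fin.castAdd L2.n i))) →
      (L1 + L2).InducesId3 g.toLinearMap) ∧
    ((¬ ∀ i : Fin (L1 + L2).n, (3 : ℤ) ∣ (g v i - v i)) →
      (L1 + L2).InducesNeg3 g.toLinearMap) := by
  have hgv := hv.map_isometry hg
  have hgen : (L1 + L2).GeneratesThreeTorsion (third v) :=
    generatesThreeTorsion_add h31 h22 (third_mem_dual hv.2) (three_smul_third_mem_latt v)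
      hv.third_not_mem_latt
  have hmap : (L1 + L2).mapQ g.toLinearMap (third v) = third (g v) := mapQ_third _ v
  refine ⟨fun hdvd y hy hy3 => ?_, fun hndvd y hy hy3 => ?_⟩
  · have hd : third (g v - v) ∈ (L1 + L2).dual := by
      rw [third_sub]
      exact sub_mem (third_mem_dual hgv.2) (third_mem_dual hv.2)
    have hid : third (g v) - third v ∈ (L1 + L2).latt := by
      rw [← third_sub, mem_latt_add_iff_of_three_torsion h22 hd (three_smul_third_mem_latt _)]
      exact (third_mem_latt_iff _).2 hdvd
    simpa using hgen.mapQ_sub_smul_mem_latt g.toLinearMap (ε := 1) (by simpa [hmap] using hid) hy hy3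
  · have hneg := third_add_third_mem_latt hgen hgv hndvd
    simpa using hgen.mapQ_sub_smul_mem_latt g.toLinearMap (ε := -1) (by simpa [hmap] using hneg) hy hy3

open IntLattice in
/-- recognizing ℤ/3-direct and ℤ/3-reversing isometries via a 6-root. -/
theorem statement_1 (L1 L2 : IntLattice)
    (hsymm1 : L1.IsSymmLat) (hsymm2 : L2.IsSymmLat)
    (hnd1 : L1.Nondeg) (hnd2 : L2.Nondeg)
    (heven1 : L1.IsEvenLat) (heven2 : L2.IsEvenLat)
    (h31 : Nat.card (Submodule.torsionBy ℤ L1.discrG 3) = 3)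
    (h22 : ∀ x : L2.discrG, (2 : ℤ) • x = 0)
    (g : (Fin (L1 + L2).n → ℤ) ≃ₗ[ℤ] (Fin (L1 + L2).n → ℤ))
    (hg : (L1 + L2).IsIsometry g)
    (v : Fin (L1 + L2).n → ℤ)
    (hv : (L1 + L2).IsSixRoot v) :
    ((∀ i : Fin L1.n,
        (3 : ℤ) ∣ (g v (Fin.castAdd L2.n i) - v (Fin.castAdd L2.n i))) →
      (L1 + L2).InducesId3 g.toLinearMap) ∧
    ((¬ ∀ i : Fin (L1 + L2).n, (3 : ℤ) ∣ (g v i - v i)) →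
      (L1 + L2).InducesNeg3 g.toLinearMap) :=
  statement_1_general L1 L2 h31 h22 g hg v hv
end

section
/- The lattice ⟨−2⟩+A₂+A₁+D₄ is isometric to the lattice U+A₂+4A₁. -/
namespace IntLattice

open Matrix

lemma bform_mulVec_mulVec (M : IntLattice) {m : Type*} [Fintype m]
    (P : Matrix (Fin M.n) m ℤ) (x y : m → ℤ) :
    M.bform (P *ᵥ x) (P *ᵥ y) = x ⬝ᵥ ((Pᵀ * M.B * P) *ᵥ y) := by
  rw [bform, mulVec_mulVec, dotProduct_mulVec, ← vecMul_transpose, vecMul_vecMul,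
    ← dotProduct_mulVec, Matrix.mul_assoc]

theorem isometric_of_transpose_mul_mul {L M : IntLattice} (P : Matrix (Fin M.n) (Fin L.n) ℤ)
    (Q : Matrix (Fin L.n) (Fin M.n) ℤ) (hPQ : P * Q = 1) (hQP : Q * P = 1)
    (hP : Pᵀ * M.B * P = L.B) : Isometric L M := by
  refine ⟨LinearEquiv.ofLinearMap P.mulVecLin Q.mulVecLin ?_ ?_, fun x y => ?_⟩
  · exact LinearMap.ext fun v => by simp [mulVec_mulVec, hPQ]
  · exact LinearMap.ext fun v => by simp [mulVec_mulVec, hQP]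
  · exact (M.bform_mulVec_mulVec P x y).trans (by rw [hP]; rfl)

end IntLattice

open IntLattice in
/-- `⟨−2⟩+A₂+A₁+D₄` is isometric to `U+A₂+4A₁`. -/
theorem statement_18 :
    IntLattice.Isometric (latGen (-2) + latA2 + latA1 + latD4)
      (latU + latA2 + rep 4 latA1) := by
  -- The columns of the first matrix are the images in `U+A₂+4A₁` of the standard basis of
  -- `⟨−2⟩+A₂+A₁+D₄`; the second matrix is its inverse.
  refine isometric_of_transpose_mul_mul
    !![2, 0, 0, 0, 1, -1, -1, 1;
      -2, 0, 0, 0, -1, 0, 0, 0;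
       0, -1, 0, 0, 0, 0, 0, 0;
       0, 0, -1, 0, 0, 0, 0, 0;
       1, 0, 0, 0, 1, -1, 0, 0;
      -1, 0, 0, 0, -1, 0, 1, 0;
       0, 0, 0, -1, 0, 0, 0, 0;
      -1, 0, 0, 0, 0, 0, 0, -1]
    !![1, -1, 0, 0, -1, 1, 0, 1;
       0, 0, -1, 0, 0, 0, 0, 0;
       0, 0, 0, -1, 0, 0, 0, 0;
       0, 0, 0, 0, 0, 0, -1, 0;
      -2, 1, 0, 0, 2, -2, 0, -2;
      -1, 0, 0, 0, 0, -1, 0, -1;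
      -1, 0, 0, 0, 1, 0, 0, -1;
      -1, 1, 0, 0, 1, -1, 0, -2] ?_ ?_ ?_ <;> decide
end
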